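/- Let R > 0, β > −2π, and let h : [0,R] → ℝ be C¹ with h(0) = 0 and h(R) ≠ 0. Then 2π ∫₀^R (h′(r)² + h(r)²/r²) r dr + β h(R)² > 0. -/

import Mathlib

/-!
The pointwise inequality `2 h h' ≤ (h'² + h²/r²) r`, i.e. `(r h' - h)² / r ≥ 0`, integrates
(using `h 0 = 0`) to the Hardy-type bound `h(R)² ≤ ∫₀^R (h'² + h²/r²) r dr`. Hence the numerator is
at least `(2π + β) h(R)² > 0`. The integral is finite because a `C¹` function vanishing at `0` is
Lipschitz, so `|h| ≤ K r` and `|h'| ≤ K`.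
-/

open Real MeasureTheory Set

/-- In polar coordinates, the Dirichlet energy density of the planar function `x ↦ h ‖x‖`. -/
noncomputable def radialDirichletDensity (h : ℝ → ℝ) (r : ℝ) : ℝ :=
  ((deriv h r) ^ 2 + (h r) ^ 2 / r ^ 2) * r

lemma two_mul_mul_le_sq_add_sq_div_sq_mul {a b r : ℝ} (hr : 0 < r) :
    2 * b * a ≤ (a ^ 2 + b ^ 2 / r ^ 2) * r := by
  have key : (a ^ 2 + b ^ 2 / r ^ 2) * r - 2 * b * a = (a * r - b) ^ 2 / r := by
    field_simp
    ring
  have : 0 ≤ (a * r - b) ^ 2 / r := by positivity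
  linarith

lemma sq_add_sq_div_sq_mul_le {a b r M : ℝ} (hr : 0 < r) (ha : |a| ≤ M) (hb : |b| ≤ M * r) :
    (a ^ 2 + b ^ 2 / r ^ 2) * r ≤ 2 * M ^ 2 * r := by
  have ha2 : a ^ 2 ≤ M ^ 2 := sq_le_sq' (abs_le.mp ha).1 (abs_le.mp ha).2
  have hb2 : b ^ 2 / r ^ 2 ≤ M ^ 2 := by
    rw [div_le_iff₀ (by positivity), ← mul_pow]
    exact sq_le_sq' (abs_le.mp hb).1 (abs_le.mp hb).2
  nlinarith

namespace radialDirichletDensity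

variable {h : ℝ → ℝ} {R : ℝ}

lemma integrableOn_of_lipschitzOnWith {K : NNReal} (hlip : LipschitzOnWith K h (Icc 0 R))
    (h0 : h 0 = 0) : IntegrableOn (radialDirichletDensity h) (Icc 0 R) := by
  rw [integrableOn_Icc_iff_integrableOn_Ioo]
  have hmeas : AEStronglyMeasurable (radialDirichletDensity h) (volume.restrict (Ioo 0 R)) := by
    have hh_meas : AEStronglyMeasurable h (volume.restrict (Ioo 0 R)) :=
      (hlip.continuousOn.mono Ioo_subset_Icc_self).aestronglyMeasurable measurableSet_Ioo
    have hderiv_meas := (measurable_deriv h).aestronglyMeasurable (μ := volume.restrict (Ioo 0 R))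
    have hid : AEStronglyMeasurable (fun r : ℝ => r) (volume.restrict (Ioo 0 R)) :=
      measurable_id.aestronglyMeasurable
    exact ((hderiv_meas.pow 2).add ((hh_meas.pow 2).div₀ (hid.pow 2))).mul hid
  refine Integrable.mono' (integrableOn_const (C := 2 * K ^ 2 * R) measure_Ioo_lt_top.ne)
    hmeas ?_
  rw [ae_restrict_iff' measurableSet_Ioo]
  filter_upwards with r hr
  have hderiv : |deriv h r| ≤ K :=
    norm_deriv_le_of_lipschitzOn (Icc_mem_nhds hr.1 hr.2) hlip
  have hval : |h r| ≤ K * r := by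
    simpa [h0, abs_of_pos hr.1] using
      hlip.dist_le_mul r (Ioo_subset_Icc_self hr) 0 ⟨le_rfl, hr.1.le.trans hr.2.le⟩
  have hnonneg : 0 ≤ radialDirichletDensity h r := by
    unfold radialDirichletDensity
    have := hr.1
    positivity
  rw [Real.norm_eq_abs, abs_of_nonneg hnonneg]
  calc radialDirichletDensity h r ≤ 2 * K ^ 2 * r := sq_add_sq_div_sq_mul_le hr.1 hderiv hval
    _ ≤ 2 * K ^ 2 * R := by gcongr; exact hr.2.le

lemma sq_le_integral (hR : 0 ≤ R) (hcont : ContinuousOn h (Icc 0 R))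
    (hdiff : DifferentiableOn ℝ h (Ioo 0 R))
    (hint : IntegrableOn (radialDirichletDensity h) (Icc 0 R)) (h0 : h 0 = 0) :
    h R ^ 2 ≤ ∫ r in (0 : ℝ)..R, radialDirichletDensity h r := by
  have hFTC := intervalIntegral.sub_le_integral_of_hasDeriv_right_of_le hR (hcont.pow 2)
    (fun r hr => (((hdiff r hr).differentiableAt (isOpen_Ioo.mem_nhds hr)).hasDerivAt.pow
      2).hasDerivWithinAt) hint
    (fun r hr => by
      simpa [radialDirichletDensity, mul_comm] using
        two_mul_mul_le_sq_add_sq_div_sq_mul (a := deriv h r) (b := h r) hr.1)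
  simpa [h0] using hFTC

end radialDirichletDensity

/-- strict positivity of the Robin Rayleigh-quotient numerator. -/
theorem robin_numerator_pos (R β : ℝ) (hR : 0 < R) (hβ : -(2 * π) < β)
    (h : ℝ → ℝ) (hC1 : ContDiffOn ℝ 1 h (Set.Icc 0 R)) (h0 : h 0 = 0)
    (hR0 : h R ≠ 0) :
    0 < 2 * π * (∫ r in (0 : ℝ)..R, ((deriv h r) ^ 2 + (h r) ^ 2 / r ^ 2) * r)
        + β * (h R) ^ 2 := by
  obtain ⟨K, hlip⟩ := hC1.exists_lipschitzOnWith one_ne_zero (convex_Icc 0 R) isCompact_Icc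
  have hardy : h R ^ 2 ≤ ∫ r in (0 : ℝ)..R, radialDirichletDensity h r :=
    radialDirichletDensity.sq_le_integral hR.le hC1.continuousOn
      ((hC1.differentiableOn one_ne_zero).mono Ioo_subset_Icc_self)
      (radialDirichletDensity.integrableOn_of_lipschitzOnWith hlip h0) h0
  have hR2 : 0 < h R ^ 2 := by positivity
  change 0 < 2 * π * (∫ r in (0 : ℝ)..R, radialDirichletDensity h r) + β * h R ^ 2
  nlinarith [pi_pos]
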